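/- Let m ∈ ℕ with m ≥ 1 and let t > 0 be a real number. For points of the probability simplex in ℝ^m, i.e. vectors p : Fin m → ℝ with p(k) ≥ 0 for all k and ∑_{k} p(k) = 1, define k(p, q) = exp(-t · arccos(∑_{k} √(p(k) · q(k)))). Then k is a positive definite kernel on the probability simplex: for every finite family p_1, …, p_N of points of the simplex and every family of real coefficients c_1, …, c_N, one has ∑_{i=1}^N ∑_{j=1}^N c_i c_j k(p_i, p_j) ≥ 0. -/

import Mathlib

/-!
With `xᵢ = √pᵢ`, the matrix `uᵢⱼ = ∑ₖ √(pᵢ(k) pⱼ(k)) = ⟨xᵢ, xⱼ⟩` is a Gram matrix of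
unit vectors, so it is positive semidefinite with entries in `[-1, 1]`. Since
`arccos = π/2 - arcsin`, the kernel is `exp(-tπ/2) · exp(t · arcsin uᵢⱼ)`. Both `arcsin` and
`exp(t ·)` are power series with nonnegative coefficients, and by the Schur product theorem
such a series applied entrywise to a positive semidefinite matrix stays positive
semidefinite: each entrywise power is, and the cone is closed.
-/

open Filter Topology

open Polynomial in
theorem Ring.choose_nonneg {R : Type*} [Field R] [LinearOrder R] [IsStrictOrderedRing R]
    {a : R} {n : ℕ} (h : (n : R) - 1 ≤ a) : 0 ≤ Ring.choose a n := by
  rw [Ring.choose_eq_smul, descPochhammer_smeval_eq_ascPochhammer, ascPochhammer_smeval_eq_eval,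
    ← descPochhammer_eval_eq_ascPochhammer, smul_eq_mul]
  exact mul_nonneg (by positivity) (descPochhammer_nonneg h)

theorem Real.hasSum_one_div_sqrt_one_sub {y : ℝ} (hy : |y| < 1) :
    HasSum (fun n : ℕ => Ring.choose ((1 / 2 : ℝ) + n - 1) n * y ^ n) (1 / √(1 - y)) := by
  have h := (Real.one_div_one_sub_rpow_hasFPowerSeriesOnBall_zero (1 / 2)).hasSum
    (y := y) (by simpa [enorm_eq_nnnorm, ← NNReal.coe_lt_one] using hy)
  simpa [FormalMultilinearSeries.ofScalars_apply_eq, Real.sqrt_eq_rpow, mul_comm] using h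

theorem Real.arcsin_eq_integral {x : ℝ} (hx : |x| < 1) :
    arcsin x = ∫ s in (0 : ℝ)..x, 1 / √(1 - s ^ 2) := by
  have hlt : ∀ s ∈ Set.uIcc 0 x, |s| < 1 := fun s hs =>
    (by simpa using Set.abs_sub_left_of_mem_uIcc hs : |s| ≤ |x|).trans_lt hx
  have hcont : ContinuousOn (fun s : ℝ => 1 / √(1 - s ^ 2)) (Set.uIcc 0 x) := by
    refine continuousOn_const.div (by fun_prop) fun s hs => ?_
    have := abs_lt.mp (hlt s hs)
    exact (Real.sqrt_pos.mpr (by nlinarith)).ne'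
  rw [intervalIntegral.integral_eq_sub_of_hasDerivAt (f := arcsin) (fun s hs => ?_)
    hcont.intervalIntegrable, arcsin_zero, sub_zero]
  have := abs_lt.mp (hlt s hs)
  exact Real.hasDerivAt_arcsin (by linarith) (by linarith)

/-- Termwise integration of `1 / √(1 - s²) = ∑ₙ (n - 1/2 choose n) s²ⁿ`. -/
theorem Real.hasSum_arcsin {x : ℝ} (hx : |x| < 1) :
    HasSum (fun n : ℕ => Ring.choose ((1 / 2 : ℝ) + n - 1) n / (2 * n + 1) * x ^ (2 * n + 1))
      (arcsin x) := by
  have hsq : ∀ s ∈ Set.uIcc 0 x, s ^ 2 ≤ x ^ 2 := fun s hs =>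
    sq_le_sq.mpr (by simpa using Set.abs_sub_left_of_mem_uIcc hs)
  have hsq_lt : ∀ s ∈ Set.uIcc 0 x, |s ^ 2| < 1 := fun s hs => by
    rw [abs_of_nonneg (sq_nonneg s)]
    exact (hsq s hs).trans_lt (by simpa [sq_lt_one_iff_abs_lt_one] using hx)
  have hseries := intervalIntegral.hasSum_integral_of_dominated_convergence
    (μ := MeasureTheory.volume) (a := 0) (b := x)
    (F := fun (n : ℕ) (s : ℝ) => Ring.choose ((1 / 2 : ℝ) + n - 1) n * (s ^ 2) ^ n)
    (f := fun s => 1 / √(1 - s ^ 2))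
    (fun (n : ℕ) _ => Ring.choose ((1 / 2 : ℝ) + n - 1) n * (x ^ 2) ^ n)
    (fun n => (by fun_prop : Continuous _).aestronglyMeasurable) ?_ ?_ intervalIntegrable_const ?_
  · rw [Real.arcsin_eq_integral hx]
    refine hseries.congr_fun fun n => ?_
    simp only [intervalIntegral.integral_const_mul, ← pow_mul, integral_pow,
      zero_pow (Nat.succ_ne_zero (2 * n))]
    push_cast
    ring
  · refine fun n => .of_forall fun s hs => ?_
    have hβ : 0 ≤ Ring.choose ((1 / 2 : ℝ) + n - 1) n := Ring.choose_nonneg (by linarith)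
    rw [Real.norm_eq_abs, abs_mul, abs_of_nonneg hβ, abs_pow, abs_of_nonneg (sq_nonneg s)]
    exact mul_le_mul_of_nonneg_left
      (pow_le_pow_left₀ (sq_nonneg s) (hsq s (Set.uIoc_subset_uIcc hs)) n) hβ
  · exact .of_forall fun _ _ =>
      (Real.hasSum_one_div_sqrt_one_sub (hsq_lt x Set.right_mem_uIcc)).summable
  · exact .of_forall fun s hs =>
      Real.hasSum_one_div_sqrt_one_sub (hsq_lt s (Set.uIoc_subset_uIcc hs))

namespace Matrix

variable {ι : Type*} [Fintype ι]

theorem isClosed_setOf_posSemidef : IsClosed {A : Matrix ι ι ℝ | A.PosSemidef} := by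
  simp only [posSemidef_iff_dotProduct_mulVec, Set.ofPred_and, Set.ofPred_forall]
  refine .inter (isClosed_eq continuous_id.matrix_conjTranspose continuous_id) ?_
  exact isClosed_iInter fun x => isClosed_le continuous_const
    (continuous_const.dotProduct (continuous_id.matrix_mulVec continuous_const))

theorem PosSemidef.of_hasSum {κ : Type*} {A : κ → Matrix ι ι ℝ} {B : Matrix ι ι ℝ}
    (hA : ∀ k, (A k).PosSemidef) (h : HasSum A B) : B.PosSemidef :=
  isClosed_setOf_posSemidef.mem_of_tendsto h
    (.of_forall fun s => posSemidef_sum s fun k _ => hA k)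

theorem PosSemidef.map_pow {A : Matrix ι ι ℝ} (hA : A.PosSemidef) :
    ∀ n : ℕ, (A.map (· ^ n)).PosSemidef
  | 0 => by
    have h := posSemidef_vecMulVec_self_star (fun _ : ι => (1 : ℝ))
    rwa [show vecMulVec _ _ = A.map (· ^ 0) by ext; simp [vecMulVec]] at h
  | n + 1 => by
    rw [show A.map (· ^ (n + 1)) = A.map (· ^ n) ⊙ A by ext; simp [pow_succ]]
    exact (hA.map_pow n).hadamard hA

theorem PosSemidef.map_of_hasSum {A : Matrix ι ι ℝ} (hA : A.PosSemidef) {κ : Type*}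
    {a : κ → ℝ} {e : κ → ℕ} (ha : ∀ k, 0 ≤ a k) {f : ℝ → ℝ}
    (hf : ∀ i j, HasSum (fun k => a k * A i j ^ e k) (f (A i j))) :
    (A.map f).PosSemidef :=
  .of_hasSum (A := fun k => a k • A.map (· ^ e k)) (fun k => (hA.map_pow (e k)).smul (ha k))
    (Pi.hasSum.mpr fun i => Pi.hasSum.mpr fun j => hf i j)

theorem PosSemidef.map_arcsin {A : Matrix ι ι ℝ} (hA : A.PosSemidef) (h : ∀ i j, |A i j| < 1) :
    (A.map Real.arcsin).PosSemidef :=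
  hA.map_of_hasSum (fun n => div_nonneg (Ring.choose_nonneg (by linarith)) (by positivity))
    fun i j => Real.hasSum_arcsin (h i j)

theorem PosSemidef.map_exp_mul {A : Matrix ι ι ℝ} (hA : A.PosSemidef) {t : ℝ} (ht : 0 ≤ t) :
    (A.map fun x => Real.exp (t * x)).PosSemidef :=
  hA.map_of_hasSum (a := fun n => t ^ n / n.factorial) (e := id) (fun n => by positivity)
    fun i j => by
      simpa [Real.exp_eq_exp_ℝ, mul_pow, div_mul_eq_mul_div]
        using NormedSpace.expSeries_div_hasSum_exp (t * A i j)

theorem PosSemidef.map_exp_neg_mul_arccos {A : Matrix ι ι ℝ} (hA : A.PosSemidef)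
    (h : ∀ i j, |A i j| ≤ 1) {t : ℝ} (ht : 0 ≤ t) :
    (A.map fun x => Real.exp (-t * Real.arccos x)).PosSemidef := by
  -- The series of `arcsin` is only used on `|x| < 1`: shrink `A` to `r • A` with `r < 1`,
  -- then let `r → 1` in the closed cone of positive semidefinite matrices.
  have hscaled : ∀ r ∈ Set.Ico (0 : ℝ) 1,
      ((r • A).map fun x => Real.exp (-t * Real.arccos x)).PosSemidef := by
    rintro r ⟨hr0, hr1⟩
    have hlt : ∀ i j, |(r • A) i j| < 1 := fun i j => by
      rw [smul_apply, smul_eq_mul, abs_mul, abs_of_nonneg hr0]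
      nlinarith [h i j, abs_nonneg (A i j)]
    have hpsd := (((hA.smul hr0).map_arcsin hlt).map_exp_mul ht).smul
      (Real.exp_pos (-t * (Real.pi / 2))).le
    convert hpsd using 1
    ext i j
    simp only [map_apply, smul_apply, smul_eq_mul, Real.arccos_eq_pi_div_two_sub_arcsin,
      ← Real.exp_add]
    ring_nf
  have hlim : Tendsto (fun r : ℝ => (r • A).map fun x => Real.exp (-t * Real.arccos x))
      (𝓝[<] 1) (𝓝 (A.map fun x => Real.exp (-t * Real.arccos x))) := by
    have hcont : Continuous fun r : ℝ => (r • A).map fun x => Real.exp (-t * Real.arccos x) :=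
      (continuous_id.smul continuous_const).matrix_map (by fun_prop)
    simpa using (hcont.tendsto 1).mono_left nhdsWithin_le_nhds
  exact isClosed_setOf_posSemidef.mem_of_tendsto hlim
    (eventually_of_mem (Ico_mem_nhdsLT zero_lt_one) hscaled)

end Matrix

theorem persistence_fisher_kernel_pos_def_simplex_general
    (m : ℕ) (t : ℝ) (ht : 0 < t)
    (N : ℕ) (p : Fin N → Fin m → ℝ)
    (hp0 : ∀ i k, 0 ≤ p i k) (hp1 : ∀ i, ∑ k, p i k = 1)
    (c : Fin N → ℝ) :
    0 ≤ ∑ i, ∑ j, c i * c j *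
        Real.exp (-t * Real.arccos (∑ k, Real.sqrt (p i k * p j k))) := by
  set B : Matrix (Fin N) (Fin m) ℝ := Matrix.of fun i k => √(p i k)
  have hB : ∀ i, ∑ k, B i k ^ 2 = 1 := fun i => by
    simp [B, Real.sq_sqrt (hp0 i _), hp1 i]
  have hG : ∀ i j, (B * B.conjTranspose) i j = ∑ k, √(p i k * p j k) := fun i j => by
    simp [B, Matrix.mul_apply, Real.sqrt_mul (hp0 i _)]
  have hG1 : ∀ i j, |(B * B.conjTranspose) i j| ≤ 1 := fun i j => by
    have := Finset.sum_mul_sq_le_sq_mul_sq Finset.univ (B i) (B j)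
    rw [hB, hB, one_mul] at this
    simpa [Matrix.mul_apply, sq_le_one_iff_abs_le_one] using this
  have hK := ((Matrix.posSemidef_self_mul_conjTranspose B).map_exp_neg_mul_arccos hG1
    ht.le).dotProduct_mulVec_nonneg c
  simp only [dotProduct, Matrix.mulVec, Matrix.map_apply, hG, star_trivial, Finset.mul_sum] at hK
  exact hK.trans_eq (Finset.sum_congr rfl fun i _ => Finset.sum_congr rfl fun j _ => by ring)

/-- For `t > 0`, the kernel `(p, q) ↦ exp (-t * arccos (∑ k, √(p k * q k)))` is positive
definite on the probability simplex in `ℝ^m`. -/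
theorem persistence_fisher_kernel_pos_def_simplex
    (m : ℕ) (hm : 1 ≤ m) (t : ℝ) (ht : 0 < t)
    (N : ℕ) (p : Fin N → Fin m → ℝ)
    (hp0 : ∀ i k, 0 ≤ p i k) (hp1 : ∀ i, ∑ k, p i k = 1)
    (c : Fin N → ℝ) :
    0 ≤ ∑ i, ∑ j, c i * c j *
        Real.exp (-t * Real.arccos (∑ k, Real.sqrt (p i k * p j k))) :=
  persistence_fisher_kernel_pos_def_simplex_general m t ht N p hp0 hp1 c
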